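/- Let f be α-strongly convex and β-smooth with minimizer x*, η ∈ (0, 1/β), and let R_η be the ULA Markov kernel. Then for any x ∈ ℝ^d and i ∈ ℕ, ∫ |y − x*|² (δ_x R_η^i)(dy) ≤ (1 − αη)^i |x − x*|² + (2d/α)(1 − (1 − αη)^i). -/

import Mathlib

open MeasureTheory Real NNReal ProbabilityTheory

/-- A probability distribution `ν` on an inner-product space satisfies a log-Sobolev
inequality with constant `C`. -/
noncomputable def SatisfiesLSI {E : Type*} [NormedAddCommGroup E] [InnerProductSpace ℝ E]
    [MeasurableSpace E] (ν : Measure E) (C : ℝ) : Prop :=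
  ∀ g : E → ℝ, ContDiff ℝ (⊤ : ℕ∞) g →
    Integrable (fun x => g x ^ 2 * |Real.log (g x)|) ν →
    ∫ x, g x ^ 2 * Real.log (g x ^ 2) ∂ν
      - (∫ x, g x ^ 2 ∂ν) * Real.log (∫ x, g x ^ 2 ∂ν)
      ≤ 2 * C * ∫ x, ‖fderiv ℝ g x‖ ^ 2 ∂ν

/-- The standard Gaussian distribution `N(0, I_d)` on `ℝ^d`. -/
noncomputable def stdGaussian (d : ℕ) : Measure (EuclideanSpace ℝ (Fin d)) :=
  Measure.map (⇑(EuclideanSpace.equiv (Fin d) ℝ).symm)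
    (Measure.pi fun _ : Fin d => gaussianReal 0 1)

set_option linter.unusedSectionVars false
set_option linter.unusedVariables false
set_option maxHeartbeats 1000000
open scoped ENNReal RealInnerProductSpace

lemma pdf_std (x : ℝ) : gaussianPDFReal 0 1 x = (Real.sqrt (2*π))⁻¹ * rexp (-x^2/2) := by
  simp [gaussianPDFReal]

lemma gauss_density : (gaussianReal 0 1)
    = volume.withDensity (fun x => ((Real.toNNReal (gaussianPDFReal 0 1 x) : ℝ≥0) : ℝ≥0∞)) := by
  rw [gaussianReal_of_var_ne_zero 0 one_ne_zero]; rfl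

lemma gauss_integral (g : ℝ → ℝ) :
    ∫ t, g t ∂(gaussianReal 0 1) = ∫ t, gaussianPDFReal 0 1 t * g t := by
  rw [gauss_density, integral_withDensity_eq_integral_smul
    ((measurable_gaussianPDFReal 0 1).real_toNNReal) g]
  refine integral_congr_ae (Filter.Eventually.of_forall fun t => ?_)
  simp [NNReal.smul_def, Real.coe_toNNReal _ (gaussianPDFReal_nonneg 0 1 t)]

lemma gauss_integrable_iff (g : ℝ → ℝ) :
    Integrable g (gaussianReal 0 1) ↔ Integrable (fun t => gaussianPDFReal 0 1 t * g t) volume := by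
  rw [gauss_density, integrable_withDensity_iff_integrable_smul
    ((measurable_gaussianPDFReal 0 1).real_toNNReal)]
  constructor <;> intro h <;> refine h.congr (Filter.Eventually.of_forall fun t => ?_) <;>
    simp [NNReal.smul_def, Real.coe_toNNReal _ (gaussianPDFReal_nonneg 0 1 t)]

lemma integrable_pdf_mul_pow (k : ℕ) :
    Integrable (fun t : ℝ => gaussianPDFReal 0 1 t * t ^ k) volume := by
  have h : Integrable (fun t : ℝ => t ^ (k:ℝ) * rexp (-(1/2) * t^2)) volume :=
    integrable_rpow_mul_exp_neg_mul_sq (by norm_num)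
      (lt_of_lt_of_le neg_one_lt_zero (Nat.cast_nonneg k))
  have h2 := h.const_mul ((Real.sqrt (2*π))⁻¹)
  refine h2.congr (Filter.Eventually.of_forall fun t => ?_)
  simp only [Real.rpow_natCast, pdf_std]
  rw [show -(1/2) * t^2 = -t^2/(2:ℝ) by ring]
  ring

lemma gauss_integrable_pow (k : ℕ) : Integrable (fun t : ℝ => t ^ k) (gaussianReal 0 1) :=
  (gauss_integrable_iff _).2 (integrable_pdf_mul_pow k)

lemma gauss_integrable_id : Integrable (fun t : ℝ => t) (gaussianReal 0 1) := by
  simpa using gauss_integrable_pow 1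

lemma gauss_mean_zero : ∫ t, t ∂(gaussianReal 0 1) = 0 := by
  rw [gauss_integral]
  have h := integral_neg_eq_self (fun t => gaussianPDFReal 0 1 t * t) (volume : Measure ℝ)
  have h2 : ∀ t : ℝ, gaussianPDFReal 0 1 (-t) * (-t) = -(gaussianPDFReal 0 1 t * t) := by
    intro t; rw [pdf_std, pdf_std, neg_sq]; ring
  simp_rw [h2, integral_neg] at h
  linarith

lemma gauss_second_moment : ∫ t, t ^ 2 ∂(gaussianReal 0 1) = 1 := by
  rw [gauss_integral]
  have heven : ∀ t : ℝ, gaussianPDFReal 0 1 |t| * |t| ^ 2 = gaussianPDFReal 0 1 t * t ^ 2 := by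
    intro t; simp [pdf_std, sq_abs]
  have habs := integral_comp_abs (f := fun t => gaussianPDFReal 0 1 t * t ^ 2)
  simp_rw [heven] at habs
  rw [habs]
  have hrp : ∀ t : ℝ, t ^ ((2:ℕ):ℝ) = t ^ (2:ℕ) := fun t => Real.rpow_natCast t 2
  have hval := integral_rpow_mul_exp_neg_mul_rpow (p := ((2:ℕ):ℝ)) (q := ((2:ℕ):ℝ)) (b := 1/2)
    (by norm_num) (by norm_num) (by norm_num)
  simp_rw [hrp] at hval
  have hIoi : ∫ t in Set.Ioi (0:ℝ), gaussianPDFReal 0 1 t * t ^ 2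
      = (Real.sqrt (2*π))⁻¹ * ∫ t in Set.Ioi (0:ℝ), t ^ (2:ℕ) * rexp (-(1/2) * t ^ (2:ℕ)) := by
    rw [← integral_const_mul]
    refine setIntegral_congr_fun measurableSet_Ioi (fun t _ => ?_)
    rw [pdf_std, show -(1/2) * t^(2:ℕ) = -t^2/(2:ℝ) by ring]
    ring
  rw [hIoi, hval]
  have h32 : (((2:ℕ):ℝ) + 1) / ((2:ℕ):ℝ) = 1/2 + 1 := by norm_num
  rw [h32, Real.Gamma_add_one (by norm_num), Real.Gamma_one_half_eq]
  have hb : ((1:ℝ)/2) ^ (-(((2:ℕ):ℝ) + 1) / ((2:ℕ):ℝ)) = (2:ℝ) ^ ((3:ℝ)/2) := by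
    rw [one_div, ← Real.rpow_neg_one (2:ℝ), ← Real.rpow_mul (by norm_num)]
    norm_num
  rw [hb]
  have h2s : (2:ℝ) ^ ((3:ℝ)/2) = 2 * Real.sqrt 2 := by
    rw [show (3:ℝ)/2 = 1 + 1/2 by norm_num, Real.rpow_add (by norm_num), Real.rpow_one,
      ← Real.sqrt_eq_rpow]
  rw [h2s, Real.sqrt_mul (by norm_num) π]
  have hs2 : (0:ℝ) < Real.sqrt 2 := Real.sqrt_pos.2 (by norm_num)
  have hsp : (0:ℝ) < Real.sqrt π := Real.sqrt_pos.2 Real.pi_pos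
  have h22 : Real.sqrt 2 * Real.sqrt 2 = 2 := Real.mul_self_sqrt (by norm_num)
  field_simp
  norm_num


lemma normsq_eq_sum {d : ℕ} (z : EuclideanSpace ℝ (Fin d)) : ‖z‖^2 = ∑ k, (z k)^2 := by
  rw [← real_inner_self_eq_norm_sq]
  simp only [PiLp.inner_apply, RCLike.inner_apply, conj_trivial, pow_two]

lemma pi_map_eval (d : ℕ) (k : Fin d) :
    (Measure.pi fun _ : Fin d => gaussianReal 0 1).map (Function.eval k) = gaussianReal 0 1 := by
  ext s hs
  rw [Measure.map_apply (measurable_pi_apply k) hs, Set.eval_preimage, Measure.pi_pi]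
  rw [Finset.prod_eq_single k (fun b _ hbk => by rw [Function.update_of_ne hbk]; exact measure_univ)
    (fun h => absurd (Finset.mem_univ k) h)]
  rw [Function.update_self]

lemma stdGaussian_map_eval (d : ℕ) (k : Fin d) :
    (stdGaussian d).map (fun y : EuclideanSpace ℝ (Fin d) => y k) = gaussianReal 0 1 := by
  have hme : Measurable (fun y : EuclideanSpace ℝ (Fin d) => y k) := (measurable_pi_apply k).comp (WithLp.measurable_ofLp _ _)
  rw [_root_.stdGaussian, Measure.map_map hme
    (EuclideanSpace.equiv (Fin d) ℝ).symm.continuous.measurable]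
  exact pi_map_eval d k

section coords
variable {d : ℕ} {Ω : Type*} [MeasurableSpace Ω] {P : Measure Ω} [IsProbabilityMeasure P]
  {W : Ω → EuclideanSpace ℝ (Fin d)} (hW : Measurable W) (hWlaw : P.map W = stdGaussian d)

include hW hWlaw

lemma coord_law (k : Fin d) : P.map (fun ω => W ω k) = gaussianReal 0 1 := by
  have hme : Measurable (fun y : EuclideanSpace ℝ (Fin d) => y k) := (measurable_pi_apply k).comp (WithLp.measurable_ofLp _ _)
  rw [show (fun ω => W ω k) = (fun y : EuclideanSpace ℝ (Fin d) => y k) ∘ W from rfl,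
    ← Measure.map_map hme hW, hWlaw, stdGaussian_map_eval]

omit hWlaw in
lemma coord_measurable (k : Fin d) : Measurable (fun ω => W ω k) := by
  have hme : Measurable (fun y : EuclideanSpace ℝ (Fin d) => y k) := (measurable_pi_apply k).comp (WithLp.measurable_ofLp _ _)
  exact hme.comp hW

lemma coord_integrable (k : Fin d) : Integrable (fun ω => W ω k) P := by
  have h : Integrable (fun t : ℝ => t) (P.map (fun ω => W ω k)) := by
    rw [coord_law hW hWlaw k]; exact gauss_integrable_id
  exact (integrable_map_measure aestronglyMeasurable_id
    (coord_measurable hW k).aemeasurable).1 h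

lemma coord_sq_integrable (k : Fin d) : Integrable (fun ω => (W ω k) ^ 2) P := by
  have h : Integrable (fun t : ℝ => t ^ 2) (P.map (fun ω => W ω k)) := by
    rw [coord_law hW hWlaw k]; exact gauss_integrable_pow 2
  exact (integrable_map_measure (by fun_prop)
    (coord_measurable hW k).aemeasurable).1 h

lemma coord_mean (k : Fin d) : ∫ ω, W ω k ∂P = 0 := by
  have h : ∫ t, t ∂(P.map (fun ω => W ω k)) = 0 := by
    rw [coord_law hW hWlaw k]; exact gauss_mean_zero
  exact (integral_map (coord_measurable hW k).aemeasurable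
    aestronglyMeasurable_id).symm.trans h

lemma coord_sq_mean (k : Fin d) : ∫ ω, (W ω k) ^ 2 ∂P = 1 := by
  have h : ∫ t, t ^ 2 ∂(P.map (fun ω => W ω k)) = 1 := by
    rw [coord_law hW hWlaw k]; exact gauss_second_moment
  exact (integral_map (f := fun t : ℝ => t ^ 2) (coord_measurable hW k).aemeasurable
    (by fun_prop)).symm.trans h

lemma normsq_integrable : Integrable (fun ω => ‖W ω‖ ^ 2) P := by
  have h : Integrable (fun ω => ∑ k, (W ω k)^2) P :=
    integrable_finset_sum _ (fun k _ => coord_sq_integrable hW hWlaw k)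
  exact h.congr (Filter.Eventually.of_forall fun ω => (normsq_eq_sum _).symm)

lemma normsq_mean : ∫ ω, ‖W ω‖ ^ 2 ∂P = d := by
  have h : ∀ ω, ‖W ω‖ ^ 2 = ∑ k, (W ω k)^2 := fun ω => normsq_eq_sum _
  simp_rw [h]
  rw [integral_finset_sum _ (fun k _ => coord_sq_integrable hW hWlaw k)]
  simp [coord_sq_mean hW hWlaw]

lemma W_memL2 : MemLp W 2 P :=
  (memLp_two_iff_integrable_sq_norm hW.aestronglyMeasurable).2 (normsq_integrable hW hWlaw)

end coords

section contraction
variable {E : Type*} [NormedAddCommGroup E] [InnerProductSpace ℝ E] [CompleteSpace E]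
variable {f : E → ℝ} {α β η : ℝ}

lemma gradient_contraction
    (hα : 0 < α) (hαβ : α ≤ β) (hf : ContDiff ℝ 2 f)
    (hhess : ∀ x v : E,
      α * ‖v‖ ^ 2 ≤ iteratedFDeriv ℝ 2 f x ![v, v] ∧
        iteratedFDeriv ℝ 2 f x ![v, v] ≤ β * ‖v‖ ^ 2)
    (hη : 0 < η) (hηβ : η * β ≤ 1) (a b : E) :
    ‖(a - η • gradient f a) - (b - η • gradient f b)‖
      ≤ Real.sqrt (1 - α * η) * ‖a - b‖ := by
  have hβ : 0 < β := lt_of_lt_of_le hα hαβ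
  have hq0 : 0 ≤ 1 - α * η := by nlinarith
  have hdf : Differentiable ℝ f := hf.differentiable (by norm_num)
  set φ : E → (E →L[ℝ] ℝ) := fderiv ℝ f with hφ
  have hφdiff : Differentiable ℝ φ :=
    (hf.fderiv_right (m := 1) (by norm_num)).differentiable one_ne_zero
  set L : StrongDual ℝ E →L[ℝ] E :=
    ((InnerProductSpace.toDual ℝ E).symm.toContinuousLinearEquiv :
      StrongDual ℝ E ≃L[ℝ] E).toContinuousLinearMap with hL
  set M : E → (E →L[ℝ] E) := fun y => L.comp (fderiv ℝ φ y) with hM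
  have hgrad : ∀ y, HasFDerivAt (gradient f) (M y) y := by
    intro y
    exact L.hasFDerivAt.comp y (hφdiff y).hasFDerivAt
  have hMinner : ∀ y v w, ⟪M y v, w⟫ = fderiv ℝ φ y v w := by
    intro y v w
    exact InnerProductSpace.toDual_symm_apply
  have hMsymm : ∀ y v w, ⟪M y v, w⟫ = ⟪M y w, v⟫ := by
    intro y v w
    rw [hMinner, hMinner]
    exact second_derivative_symmetric (f := f) (fun z => (hdf z).hasFDerivAt)
      (hφdiff y).hasFDerivAt v w
  have hMlow : ∀ y v, α * ‖v‖ ^ 2 ≤ ⟪M y v, v⟫ := by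
    intro y v
    rw [hMinner]
    have h := (hhess y v).1
    rwa [iteratedFDeriv_two_apply, Matrix.cons_val_zero, Matrix.cons_val_one, Matrix.cons_val_zero]
      at h
  have hMhigh : ∀ y v, ⟪M y v, v⟫ ≤ β * ‖v‖ ^ 2 := by
    intro y v
    rw [hMinner]
    have h := (hhess y v).2
    rwa [iteratedFDeriv_two_apply, Matrix.cons_val_zero, Matrix.cons_val_one, Matrix.cons_val_zero]
      at h
  have hMsq : ∀ y v, ‖M y v‖ ^ 2 ≤ β * ⟪M y v, v⟫ := by
    intro y v
    by_cases hw : M y v = 0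
    · rw [hw]; simp
    · set w := M y v with hwdef
      have hw2 : 0 < ‖w‖ ^ 2 := by
        have := norm_pos_iff.mpr hw
        positivity
      have hc : 0 < ⟪M y w, w⟫ := lt_of_lt_of_le (by positivity) (hMlow y w)
      set t : ℝ := ‖w‖ ^ 2 / ⟪M y w, w⟫ with ht
      have htc : t * ⟪M y w, w⟫ = ‖w‖ ^ 2 := div_mul_cancel₀ _ hc.ne'
      have hexp : ⟪M y (v - t • w), v - t • w⟫
          = ⟪M y v, v⟫ - t * ⟪M y v, w⟫ - t * ⟪M y w, v⟫ + t * (t * ⟪M y w, w⟫) := by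
        rw [map_sub, _root_.map_smul]
        simp only [inner_sub_left, inner_sub_right, real_inner_smul_left, real_inner_smul_right]
        ring
      have hMvw : ⟪M y v, w⟫ = ‖w‖ ^ 2 := by
        rw [← hwdef, real_inner_self_eq_norm_sq]
      have hMwv : ⟪M y w, v⟫ = ‖w‖ ^ 2 := by rw [← hMsymm, hMvw]
      have h0 : 0 ≤ ⟪M y (v - t • w), v - t • w⟫ :=
        le_trans (by positivity) (hMlow y (v - t • w))
      rw [hexp, hMvw, hMwv] at h0
      have h0' : t * ‖w‖ ^ 2 ≤ ⟪M y v, v⟫ := by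
        have haux : t * (t * ⟪M y w, w⟫) = t * ‖w‖ ^ 2 := by rw [htc]
        linarith [h0, haux]
      have hkey : ‖w‖ ^ 2 * ‖w‖ ^ 2 ≤ ⟪M y v, v⟫ * ⟪M y w, w⟫ := by
        have h1 := mul_le_mul_of_nonneg_right h0' hc.le
        have h2 : t * ‖w‖ ^ 2 * ⟪M y w, w⟫ = ‖w‖ ^ 2 * ‖w‖ ^ 2 := by
          rw [mul_right_comm, htc]
        linarith [h1, h2]
      have hwβ : ⟪M y w, w⟫ ≤ β * ‖w‖ ^ 2 := hMhigh y w
      have hs0 : 0 ≤ ⟪M y v, v⟫ := le_trans (by positivity) (hMlow y v)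
      nlinarith [mul_le_mul_of_nonneg_left hwβ hs0, hw2, hkey]
  have hop : ∀ y, ‖ContinuousLinearMap.id ℝ E - η • M y‖ ≤ Real.sqrt (1 - α * η) := by
    intro y
    refine ContinuousLinearMap.opNorm_le_bound _ (Real.sqrt_nonneg _) (fun v => ?_)
    have hval : (ContinuousLinearMap.id ℝ E - η • M y) v = v - η • (M y v) := by simp
    rw [hval]
    have hsq : ‖v - η • M y v‖ ^ 2 ≤ (1 - α * η) * ‖v‖ ^ 2 := by
      rw [norm_sub_sq_real, real_inner_smul_right, norm_smul, Real.norm_eq_abs, abs_of_pos hη,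
        real_inner_comm (M y v) v, mul_pow]
      have h2 := hMsq y v
      have h3 := hMlow y v
      have h5 : 0 ≤ ⟪M y v, v⟫ := le_trans (by positivity) h3
      have hA1 := mul_le_mul_of_nonneg_left h2 (mul_nonneg hη.le hη.le)
      have hA2 := mul_le_mul_of_nonneg_right (mul_le_mul_of_nonneg_right hηβ hη.le) h5
      have hA3 := mul_le_mul_of_nonneg_left h3 hη.le
      nlinarith [hA1, hA2, hA3]
    calc ‖v - η • M y v‖ = Real.sqrt (‖v - η • M y v‖ ^ 2) :=
          (Real.sqrt_sq (norm_nonneg _)).symm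
      _ ≤ Real.sqrt ((1 - α * η) * ‖v‖ ^ 2) := Real.sqrt_le_sqrt hsq
      _ = Real.sqrt (1 - α * η) * ‖v‖ := by
          rw [Real.sqrt_mul hq0, Real.sqrt_sq (norm_nonneg _)]
  have hT : ∀ y, HasFDerivAt (fun z => z - η • gradient f z)
      (ContinuousLinearMap.id ℝ E - η • M y) y := by
    intro y
    exact (hasFDerivAt_id y).sub ((hgrad y).const_smul η)
  exact Convex.norm_image_sub_le_of_norm_fderiv_le
    (f := fun z : E => z - η • gradient f z) (C := Real.sqrt (1 - α * η)) (s := Set.univ)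
    (fun z _ => (hT z).differentiableAt)
    (fun z _ => by rw [(hT z).fderiv]; exact hop z)
    convex_univ (Set.mem_univ b) (Set.mem_univ a)

lemma gradient_min_zero (xstar : E)
    (hmin : ∀ y, f xstar ≤ f y) : gradient f xstar = 0 := by
  have hloc : IsLocalMin f xstar := Filter.Eventually.of_forall hmin
  have h0 : fderiv ℝ f xstar = 0 := hloc.fderiv_eq_zero
  show (InnerProductSpace.toDual ℝ _).symm (fderiv ℝ f xstar) = 0
  rw [h0, map_zero]

lemma gradient_continuous (hf : ContDiff ℝ 2 f) : Continuous (gradient f) := by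
  have hφcont : Continuous (fderiv ℝ f) :=
    ((hf.fderiv_right (m := 1) (by norm_num)).continuous)
  exact ((InnerProductSpace.toDual ℝ E).symm.continuous).comp hφcont

end contraction

lemma realinner_eq_sum {d : ℕ} (u v : EuclideanSpace ℝ (Fin d)) :
    ⟪u, v⟫ = ∑ k, u k * v k := by
  simp [PiLp.inner_apply, RCLike.inner_apply, mul_comm]

lemma coordsq_le {d : ℕ} (z : EuclideanSpace ℝ (Fin d)) (k : Fin d) : (z k)^2 ≤ ‖z‖^2 := by
  calc (z k)^2 ≤ ∑ j, (z j)^2 :=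
        Finset.single_le_sum (f := fun j => (z j)^2) (fun _ _ => sq_nonneg _) (Finset.mem_univ k)
    _ = ‖z‖^2 := (normsq_eq_sum z).symm

section indep
variable {d : ℕ} {Ω : Type*} [MeasurableSpace Ω] {P : Measure Ω} [IsProbabilityMeasure P]

lemma X_indep_Z
    (T : EuclideanSpace ℝ (Fin d) → EuclideanSpace ℝ (Fin d)) (hT : Measurable T)
    (c : ℝ) (x : EuclideanSpace ℝ (Fin d))
    (X Z : ℕ → Ω → EuclideanSpace ℝ (Fin d))
    (hZmeas : ∀ i, Measurable (Z i))
    (hrec : ∀ i ω, X (i+1) ω = T (X i ω) + c • Z (i+1) ω)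
    (hX0 : ∀ ω, X 0 ω = x)
    (hZindep : iIndepFun Z P) (i : ℕ) :
    IndepFun (X i) (Z (i+1)) P := by
  have hrep : ∀ n, ∃ F : (Fin n → EuclideanSpace ℝ (Fin d)) → EuclideanSpace ℝ (Fin d),
      Measurable F ∧ ∀ ω, X n ω = F (fun j => Z (j.val+1) ω) := by
    intro n
    induction n with
    | zero => exact ⟨fun _ => x, measurable_const, fun ω => hX0 ω⟩
    | succ n ih =>
      obtain ⟨F, hF, hFeq⟩ := ih
      refine ⟨fun z => T (F (fun j => z j.castSucc)) + c • z (Fin.last n), ?_, ?_⟩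
      · have h1 : Measurable fun z : Fin (n+1) → EuclideanSpace ℝ (Fin d) =>
            F (fun j => z j.castSucc) :=
          hF.comp (measurable_pi_lambda _ fun j => measurable_pi_apply _)
        exact (hT.comp h1).add ((measurable_pi_apply (Fin.last n)).const_smul c)
      · intro ω
        rw [hrec n ω, hFeq ω]
        rfl
  obtain ⟨F, hF, hFeq⟩ := hrep i
  classical
  set S : Finset ℕ := Finset.image (fun j => j + 1) (Finset.range i) with hS
  have hdisj : Disjoint S ({i+1} : Finset ℕ) := by
    rw [Finset.disjoint_singleton_right, hS]
    simp only [Finset.mem_image, Finset.mem_range]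
    rintro ⟨j, hj, hji⟩
    omega
  have h1 := hZindep.indepFun_finset S {i+1} hdisj hZmeas
  have hmem : ∀ j : Fin i, (j.val + 1) ∈ S := fun j =>
    Finset.mem_image.2 ⟨j.val, Finset.mem_range.2 j.isLt, rfl⟩
  have hGmeas : Measurable (fun g : ↥S → EuclideanSpace ℝ (Fin d) =>
      F (fun j : Fin i => g ⟨j.val+1, hmem j⟩)) :=
    hF.comp (measurable_pi_lambda _ fun j => measurable_pi_apply _)
  have hHmeas : Measurable (fun g : ↥({i+1} : Finset ℕ) → EuclideanSpace ℝ (Fin d) =>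
      g ⟨i+1, Finset.mem_singleton_self _⟩) := measurable_pi_apply _
  have h2 := h1.comp hGmeas hHmeas
  have e1 : ((fun g : ↥S → EuclideanSpace ℝ (Fin d) =>
      F (fun j : Fin i => g ⟨j.val+1, hmem j⟩)) ∘ (fun a (s : ↥S) => Z s a)) = X i :=
    funext fun a => (hFeq a).symm
  have e2 : ((fun g : ↥({i+1} : Finset ℕ) → EuclideanSpace ℝ (Fin d) =>
      g ⟨i+1, Finset.mem_singleton_self _⟩) ∘ (fun a (t : ↥({i+1} : Finset ℕ)) => Z t a))
      = Z (i+1) := rfl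
  rw [e1, e2] at h2
  exact h2

end indep

theorem stmt_14 (d : ℕ) {Ω : Type*} [MeasurableSpace Ω] (P : Measure Ω) [IsProbabilityMeasure P]
    (f : EuclideanSpace ℝ (Fin d) → ℝ) (α β η κ₀ : ℝ)
    (hα : 0 < α) (hαβ : α ≤ β) (hf : ContDiff ℝ 2 f)
    (hhess : ∀ x v : EuclideanSpace ℝ (Fin d),
      α * ‖v‖ ^ 2 ≤ iteratedFDeriv ℝ 2 f x ![v, v] ∧
        iteratedFDeriv ℝ 2 f x ![v, v] ≤ β * ‖v‖ ^ 2)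
    (hη : 0 < η) (hηβ : η < 1 / β)
    (X : ℕ → Ω → EuclideanSpace ℝ (Fin d)) (Z : ℕ → Ω → EuclideanSpace ℝ (Fin d))
    (hXmeas : ∀ i, Measurable (X i)) (hZmeas : ∀ i, Measurable (Z i))
    (hrec : ∀ i ω, X (i + 1) ω
      = X i ω - η • gradient f (X i ω) + Real.sqrt (2 * η) • Z (i + 1) ω)
    (hZlaw : ∀ i, P.map (Z i) = stdGaussian d)
    (hZindep : iIndepFun Z P)
    (hX0Z : IndepFun (X 0) (fun ω => fun i => Z i ω) P)
    (xstar : EuclideanSpace ℝ (Fin d)) (hmin : ∀ y, f xstar ≤ f y)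
    (x : EuclideanSpace ℝ (Fin d)) (hX0 : ∀ ω, X 0 ω = x) (i : ℕ) :
    ∫ y, ‖y - xstar‖ ^ 2 ∂(P.map (X i))
      ≤ (1 - α * η) ^ i * ‖x - xstar‖ ^ 2
        + (2 * d / α) * (1 - (1 - α * η) ^ i) := by
  have hβ : 0 < β := lt_of_lt_of_le hα hαβ
  have hηβ1 : η * β < 1 := by
    rw [lt_div_iff₀ hβ] at hηβ; exact hηβ
  have hq0 : 0 ≤ 1 - α * η := by nlinarith
  set T : EuclideanSpace ℝ (Fin d) → EuclideanSpace ℝ (Fin d) :=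
    fun y => y - η • gradient f y with hTdef
  have hTcont : Continuous T := continuous_id.sub ((gradient_continuous hf).const_smul η)
  have hTmeas : Measurable T := hTcont.measurable
  have hgrad0 : gradient f xstar = 0 := gradient_min_zero xstar hmin
  have hTstar : T xstar = xstar := by
    show xstar - η • gradient f xstar = xstar
    rw [hgrad0, smul_zero, sub_zero]
  have hcontr : ∀ a, ‖T a - xstar‖ ≤ Real.sqrt (1 - α * η) * ‖a - xstar‖ := by
    intro a
    have h := gradient_contraction hα hαβ hf hhess hη hηβ1.le a xstar
    rwa [hgrad0, smul_zero, sub_zero] at h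
  set c : ℝ := Real.sqrt (2 * η) with hcdef
  have hc2 : c ^ 2 = 2 * η := Real.sq_sqrt (by positivity)
  have hrec' : ∀ i ω, X (i+1) ω = T (X i ω) + c • Z (i+1) ω := fun i ω => hrec i ω
  have hindep : ∀ i, IndepFun (X i) (Z (i+1)) P := fun i =>
    X_indep_Z T hTmeas c x X Z hZmeas hrec' hX0 hZindep i
  -- main induction
  have main : ∀ i, MemLp (X i) 2 P ∧
      ∫ ω, ‖X i ω - xstar‖ ^ 2 ∂P
        ≤ (1 - α * η) ^ i * ‖x - xstar‖ ^ 2 + (2 * d / α) * (1 - (1 - α * η) ^ i) := by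
    intro i
    induction i with
    | zero =>
      constructor
      · have hx0 : X 0 = fun _ => x := funext hX0
        rw [hx0]; exact memLp_const x
      · have h0 : ∀ ω, ‖X 0 ω - xstar‖ ^ 2 = ‖x - xstar‖ ^ 2 := fun ω => by rw [hX0]
        simp_rw [h0]
        simp
    | succ i ih =>
      obtain ⟨hL2, hb⟩ := ih
      set A : Ω → EuclideanSpace ℝ (Fin d) := fun ω => T (X i ω) - xstar with hAdef
      set B : Ω → EuclideanSpace ℝ (Fin d) := fun ω => c • Z (i+1) ω with hBdef
      have hAeq : ∀ ω, X (i+1) ω - xstar = A ω + B ω := by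
        intro ω
        rw [hrec' i ω]
        show T (X i ω) + c • Z (i+1) ω - xstar = (T (X i ω) - xstar) + c • Z (i+1) ω
        abel
      have hAmeas : Measurable A := (hTmeas.comp (hXmeas i)).sub measurable_const
      have hBmeas : Measurable B := (hZmeas (i+1)).const_smul c
      have hXiL2 : MemLp (fun ω => X i ω - xstar) 2 P := by
        have := hL2.sub (memLp_const (p := 2) (μ := P) xstar)
        exact this
      have hXimeas : Measurable (fun ω => X i ω - xstar) := (hXmeas i).sub measurable_const
      have hAL2 : MemLp A 2 P := by
        refine MemLp.of_le_mul (c := Real.sqrt (1 - α * η)) hXiL2 hAmeas.aestronglyMeasurable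
          (Filter.Eventually.of_forall fun ω => ?_)
        simpa using hcontr (X i ω)
      have hZL2 : MemLp (Z (i+1)) 2 P := W_memL2 (hZmeas _) (hZlaw _)
      have hBL2 : MemLp B 2 P := hZL2.const_smul c
      have hAsq : Integrable (fun ω => ‖A ω‖ ^ 2) P :=
        (memLp_two_iff_integrable_sq_norm hAmeas.aestronglyMeasurable).1 hAL2
      have hBsq : Integrable (fun ω => ‖B ω‖ ^ 2) P :=
        (memLp_two_iff_integrable_sq_norm hBmeas.aestronglyMeasurable).1 hBL2
      have hXsq : Integrable (fun ω => ‖X i ω - xstar‖ ^ 2) P :=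
        (memLp_two_iff_integrable_sq_norm hXimeas.aestronglyMeasurable).1 hXiL2
      -- coordinates
      have hAkmeas : ∀ k, Measurable (fun ω => A ω k) := fun k => coord_measurable hAmeas k
      have hBkmeas : ∀ k, Measurable (fun ω => B ω k) := fun k => coord_measurable hBmeas k
      have hABk_int : ∀ k : Fin d, Integrable (fun ω => A ω k * B ω k) P := by
        intro k
        refine Integrable.mono' (((hAsq.add hBsq)).div_const 2)
          ((hAkmeas k).mul (hBkmeas k)).aestronglyMeasurable
          (Filter.Eventually.of_forall fun ω => ?_)
        have h1 := coordsq_le (A ω) k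
        have h2 := coordsq_le (B ω) k
        rw [Real.norm_eq_abs, abs_mul]
        simp only [Pi.add_apply]
        nlinarith [sq_nonneg (|A ω k| - |B ω k|), sq_abs (A ω k), sq_abs (B ω k),
          abs_nonneg (A ω k), abs_nonneg (B ω k)]
      have hAk_int : ∀ k : Fin d, Integrable (fun ω => A ω k) P := by
        intro k
        have hsq : Integrable (fun ω => (A ω k) ^ 2) P := by
          refine Integrable.mono' hAsq ((hAkmeas k).pow_const 2).aestronglyMeasurable
            (Filter.Eventually.of_forall fun ω => ?_)
          rw [Real.norm_eq_abs, abs_of_nonneg (sq_nonneg _)]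
          exact coordsq_le (A ω) k
        exact ((memLp_two_iff_integrable_sq (hAkmeas k).aestronglyMeasurable).2 hsq).integrable
          one_le_two
      have hBk_int : ∀ k : Fin d, Integrable (fun ω => B ω k) P := by
        intro k
        have hBk : ∀ ω, B ω k = c * Z (i+1) ω k := fun ω => rfl
        simp_rw [hBk]
        exact (coord_integrable (hZmeas _) (hZlaw _) k).const_mul c
      have hinner_eq : ∀ ω, ⟪A ω, B ω⟫ = ∑ k, A ω k * B ω k := fun ω => realinner_eq_sum _ _
      have hinner_int : Integrable (fun ω => ⟪A ω, B ω⟫) P := by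
        simp_rw [hinner_eq]
        exact integrable_finset_sum _ fun k _ => hABk_int k
      -- cross term vanishes
      have hcross : ∫ ω, ⟪A ω, B ω⟫ ∂P = 0 := by
        simp_rw [hinner_eq]
        rw [integral_finset_sum _ fun k _ => hABk_int k]
        refine Finset.sum_eq_zero fun k _ => ?_
        have hφmeas : Measurable (fun y : EuclideanSpace ℝ (Fin d) => (T y - xstar) k) :=
          coord_measurable (hTmeas.sub measurable_const) k
        have hψmeas : Measurable (fun z : EuclideanSpace ℝ (Fin d) => (c • z) k) :=
          coord_measurable (measurable_const_smul c) k
        have hind : IndepFun (fun ω => A ω k) (fun ω => B ω k) P :=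
          (hindep i).comp hφmeas hψmeas
        have hmul := hind.integral_mul_eq_mul_integral (hAkmeas k).aestronglyMeasurable (hBkmeas k).aestronglyMeasurable
        have hBk0 : ∫ ω, B ω k ∂P = 0 := by
          have hBk : ∀ ω, B ω k = c * Z (i+1) ω k := fun ω => rfl
          simp_rw [hBk]
          rw [integral_const_mul, coord_mean (hZmeas _) (hZlaw _) k, mul_zero]
        calc ∫ ω, A ω k * B ω k ∂P
            = (∫ ω, A ω k ∂P) * ∫ ω, B ω k ∂P := hmul
          _ = 0 := by rw [hBk0, mul_zero]
      -- second moment of noise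
      have hBnormsq : ∫ ω, ‖B ω‖ ^ 2 ∂P = 2 * η * d := by
        have hb : ∀ ω, ‖B ω‖ ^ 2 = (2 * η) * ‖Z (i+1) ω‖ ^ 2 := by
          intro ω
          show ‖c • Z (i+1) ω‖ ^ 2 = (2 * η) * ‖Z (i+1) ω‖ ^ 2
          rw [norm_smul, mul_pow, Real.norm_eq_abs, sq_abs, hc2]
        simp_rw [hb]
        rw [integral_const_mul, normsq_mean (hZmeas _) (hZlaw _)]
      -- expansion
      have hexp : ∀ ω, ‖X (i+1) ω - xstar‖ ^ 2
          = ‖A ω‖ ^ 2 + 2 * ⟪A ω, B ω⟫ + ‖B ω‖ ^ 2 := fun ω => by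
        rw [hAeq ω, norm_add_sq_real]
      have hstep : ∫ ω, ‖X (i+1) ω - xstar‖ ^ 2 ∂P
          ≤ (1 - α * η) * ∫ ω, ‖X i ω - xstar‖ ^ 2 ∂P + 2 * η * d := by
        have hi1 : ∫ ω, ‖X (i+1) ω - xstar‖ ^ 2 ∂P
            = ∫ ω, ‖A ω‖ ^ 2 ∂P + 2 * ∫ ω, ⟪A ω, B ω⟫ ∂P + ∫ ω, ‖B ω‖ ^ 2 ∂P := by
          simp_rw [hexp]
          have e2 : Integrable (fun ω => 2 * ⟪A ω, B ω⟫) P := by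
            exact hinner_int.const_mul 2
          have e1 : Integrable (fun ω => ‖A ω‖ ^ 2 + 2 * ⟪A ω, B ω⟫) P := by
            exact hAsq.add e2
          rw [integral_add e1 hBsq, integral_add hAsq e2, integral_const_mul]
        have hA_bound : ∫ ω, ‖A ω‖ ^ 2 ∂P ≤ (1 - α * η) * ∫ ω, ‖X i ω - xstar‖ ^ 2 ∂P := by
          have hpt : ∀ ω, ‖A ω‖ ^ 2 ≤ (1 - α * η) * ‖X i ω - xstar‖ ^ 2 := by
            intro ω
            have h := hcontr (X i ω)
            have hA : A ω = T (X i ω) - xstar := rfl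
            nlinarith [norm_nonneg (T (X i ω) - xstar), norm_nonneg (X i ω - xstar),
              Real.sq_sqrt hq0, Real.sqrt_nonneg (1 - α * η)]
          calc ∫ ω, ‖A ω‖ ^ 2 ∂P ≤ ∫ ω, (1 - α * η) * ‖X i ω - xstar‖ ^ 2 ∂P :=
                integral_mono hAsq (hXsq.const_mul _) hpt
            _ = (1 - α * η) * ∫ ω, ‖X i ω - xstar‖ ^ 2 ∂P := integral_const_mul _ _
        rw [hi1, hcross, hBnormsq]
        linarith
      -- combine
      constructor
      · have hXsucc : (X (i+1)) = fun ω => (A ω + B ω) + xstar := by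
          funext ω
          have := hAeq ω
          have h2 : X (i+1) ω = (X (i+1) ω - xstar) + xstar := by abel
          rw [h2, this]
        rw [hXsucc]
        exact (hAL2.add hBL2).add (memLp_const xstar)
      · have hmono : (1 - α * η) * ∫ ω, ‖X i ω - xstar‖ ^ 2 ∂P
            ≤ (1 - α * η) * ((1 - α * η) ^ i * ‖x - xstar‖ ^ 2
              + (2 * d / α) * (1 - (1 - α * η) ^ i)) :=
          mul_le_mul_of_nonneg_left hb hq0
        have hfield : (2 * (d:ℝ) / α) * (α * η) = 2 * η * d := by
          field_simp
        have halg : (1 - α * η) * ((1 - α * η) ^ i * ‖x - xstar‖ ^ 2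
              + (2 * d / α) * (1 - (1 - α * η) ^ i)) + 2 * η * d
            = (1 - α * η) ^ (i+1) * ‖x - xstar‖ ^ 2
              + (2 * d / α) * (1 - (1 - α * η) ^ (i+1)) := by
          rw [pow_succ]
          linear_combination -hfield
        linarith [hstep, hmono]
  -- conclude
  have hAESM : AEStronglyMeasurable (fun y : EuclideanSpace ℝ (Fin d) => ‖y - xstar‖ ^ 2)
      (P.map (X i)) :=
    ((continuous_id.sub continuous_const).norm.pow 2).aestronglyMeasurable
  rw [integral_map (hXmeas i).aemeasurable hAESM]
  exact (main i).2
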